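/- For p = (p1,p2,p3,p4) ∈ ℂ⁴, let Q(p) denote the 4×4 complex matrix with rows (p1, −p2, −p3, −p4), (p2, p1, p4, −p3), (p3, −p4, p1, p2), (p4, p3, −p2, p1). Let C = {e^{iπ/4}/2, −e^{iπ/4}/2} ⊂ ℂ and let S = {Q(p) : p ∈ C⁴}. Then for all P1, P2, P3, P4 ∈ S with (P1,P2) ≠ (P3,P4), the 8×11 matrix G(P1,P2,P3,P4) has rank 8 (full row rank). -/
import Mathlib


open Matrix

noncomputable section

/-- Squared Frobenius norm of a complex matrix. -/
def frobSq {m n : ℕ} (X : Matrix (Fin m) (Fin n) ℂ) : ℝ :=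
  ∑ i, ∑ j, Complex.normSq (X i j)

/-- The 3N × (3N-1) bidiagonal matrix `Ā` of the paper (0-indexed):
`-1` on the diagonal, `1` on the subdiagonal, zeros elsewhere. -/
def Abar (N : ℕ) : Matrix (Fin (3 * N)) (Fin (3 * N - 1)) ℂ :=
  Matrix.of fun i j =>
    if i.val = j.val then -1 else if i.val = j.val + 1 then 1 else 0

/-- 2N × 3N block matrix `[[A, B, C], [D, E, F]]` built out of N × N blocks. -/
def blk23 {N : ℕ} (A B C D E F : Matrix (Fin N) (Fin N) ℂ) :
    Matrix (Fin (2 * N)) (Fin (3 * N)) ℂ :=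
  Matrix.of fun i j =>
    if hi : i.val < N then
      if hj : j.val < N then A ⟨i.val, hi⟩ ⟨j.val, hj⟩
      else if hj2 : j.val < 2 * N then B ⟨i.val, hi⟩ ⟨j.val - N, by omega⟩
      else C ⟨i.val, hi⟩ ⟨j.val - 2 * N, by have := j.isLt; omega⟩
    else
      if hj : j.val < N then D ⟨i.val - N, by have := i.isLt; omega⟩ ⟨j.val, hj⟩
      else if hj2 : j.val < 2 * N then
        E ⟨i.val - N, by have := i.isLt; omega⟩ ⟨j.val - N, by omega⟩
      else F ⟨i.val - N, by have := i.isLt; omega⟩ ⟨j.val - 2 * N, by have := j.isLt; omega⟩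

/-- 2N × 2N block matrix `[[A, B], [C, D]]` built out of N × N blocks. -/
def blk22 {N : ℕ} (A B C D : Matrix (Fin N) (Fin N) ℂ) :
    Matrix (Fin (2 * N)) (Fin (2 * N)) ℂ :=
  Matrix.of fun i j =>
    if hi : i.val < N then
      if hj : j.val < N then A ⟨i.val, hi⟩ ⟨j.val, hj⟩
      else B ⟨i.val, hi⟩ ⟨j.val - N, by have := j.isLt; omega⟩
    else
      if hj : j.val < N then C ⟨i.val - N, by have := i.isLt; omega⟩ ⟨j.val, hj⟩
      else D ⟨i.val - N, by have := i.isLt; omega⟩ ⟨j.val - N, by have := j.isLt; omega⟩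

/-- The 2N × (3N-1) matrix `G(P1, P2, P3, P4) = [[I, P1, P1·P2], [I, P3, P3·P4]] · Ā`. -/
def Gmat {N : ℕ} (P1 P2 P3 P4 : Matrix (Fin N) (Fin N) ℂ) :
    Matrix (Fin (2 * N)) (Fin (3 * N - 1)) ℂ :=
  blk23 1 P1 (P1 * P2) 1 P3 (P3 * P4) * Abar N

/-- The 1 × N all-ones row vector `w`. -/
def wrow (N : ℕ) : Matrix (Fin 1) (Fin N) ℂ :=
  Matrix.of fun _ _ => 1

/-- The 4×4 rate-one real-orthogonal-design matrix `Q(p)` of the paper. -/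
def Qmat (p : Fin 4 → ℂ) : Matrix (Fin 4) (Fin 4) ℂ :=
  !![p 0, -p 1, -p 2, -p 3;
     p 1,  p 0,  p 3, -p 2;
     p 2, -p 3,  p 0,  p 1;
     p 3,  p 2, -p 1,  p 0]

/-- The BPSK constellation `{e^{iπ/4}/2, -e^{iπ/4}/2}`. -/
def Cbpsk4 : Set ℂ :=
  {Complex.exp (Real.pi / 4 * Complex.I) / 2, -(Complex.exp (Real.pi / 4 * Complex.I) / 2)}

/-- The set of 4×4 design matrices with symbols from the BPSK constellation. -/
def Sbpsk4 : Set (Matrix (Fin 4) (Fin 4) ℂ) :=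
  {M | ∃ p : Fin 4 → ℂ, (∀ i, p i ∈ Cbpsk4) ∧ M = Qmat p}

section AuxStmt13

open Matrix

lemma auxRankEq {m n : ℕ} (M : Matrix (Fin m) (Fin n) ℂ)
    (h : ∀ x : Fin m → ℂ, x ᵥ* M = 0 → x = 0) : M.rank = m := by
  rw [← Matrix.rank_transpose, Matrix.rank]
  have hker : LinearMap.ker (Matrix.mulVecLin Mᵀ) = ⊥ := by
    ext x
    simp only [LinearMap.mem_ker, Submodule.mem_bot, Matrix.mulVecLin_apply,
      Matrix.mulVec_transpose]
    exact ⟨fun hx => h x hx, fun hx => by simp [hx]⟩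
  rw [LinearMap.finrank_range_of_inj (LinearMap.ker_eq_bot.mp hker)]
  simp

variable {N : ℕ}

lemma auxVecMulAbar (w : Fin (3*N) → ℂ) (j : Fin (3*N-1)) :
    (w ᵥ* Abar N) j = w ⟨j.1+1, by omega⟩ - w ⟨j.1, by omega⟩ := by
  have hsplit : ∀ i : Fin (3*N), w i * Abar N i j =
      (if i = ⟨j.1+1, by omega⟩ then w i else 0) + (if i = ⟨j.1, by omega⟩ then -w i else 0) := by
    intro i
    rcases eq_or_ne i ⟨j.1+1, by omega⟩ with h1 | h1 <;>
      rcases eq_or_ne i ⟨j.1, by omega⟩ with h2 | h2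
    · exact absurd (congrArg Fin.val (h1.symm.trans h2)) (by simp)
    · subst h1; simp [Abar]
    · subst h2; simp [Abar]
    · have h1' : i.1 ≠ j.1 + 1 := fun h => h1 (Fin.ext h)
      have h2' : i.1 ≠ j.1 := fun h => h2 (Fin.ext h)
      simp [Abar, h1, h2, h1', h2']
  show ∑ i, w i * Abar N i j = _
  rw [Finset.sum_congr rfl (fun i _ => hsplit i), Finset.sum_add_distrib,
    Finset.sum_ite_eq' Finset.univ, Finset.sum_ite_eq' Finset.univ]
  simp [sub_eq_add_neg]

def auxLvec (x : Fin (2*N) → ℂ) : Fin N → ℂ := fun j => x ⟨j.1, by omega⟩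
def auxRvec (x : Fin (2*N) → ℂ) : Fin N → ℂ := fun j => x ⟨N + j.1, by omega⟩

lemma auxSumSplit (f : Fin (2*N) → ℂ) :
    ∑ i, f i = (∑ i : Fin N, f ⟨i.1, by omega⟩) + ∑ i : Fin N, f ⟨N + i.1, by omega⟩ := by
  have e : ∑ i : Fin (2*N), f i = ∑ i : Fin (N+N), f (finCongr (two_mul N).symm i) :=
    (Fintype.sum_equiv (finCongr (two_mul N).symm) _ f (fun i => rfl)).symm
  rw [e, Fin.sum_univ_add]
  rfl

lemma auxBlkFst (A B C D E F : Matrix (Fin N) (Fin N) ℂ) (x : Fin (2*N) → ℂ) (j : Fin N) :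
    (x ᵥ* blk23 A B C D E F) ⟨j.1, by omega⟩ = (auxLvec x ᵥ* A) j + (auxRvec x ᵥ* D) j := by
  show ∑ i, x i * blk23 A B C D E F i ⟨j.1, by omega⟩ = _
  rw [auxSumSplit]
  congr 1
  · apply Finset.sum_congr rfl; intro i _
    have hi : (⟨i.1, by omega⟩ : Fin (2*N)).1 < N := i.isLt
    show x _ * blk23 A B C D E F _ _ = auxLvec x i * A i j
    rw [blk23, Matrix.of_apply, dif_pos hi, dif_pos j.isLt]
    rfl
  · apply Finset.sum_congr rfl; intro i _
    have hi : ¬ (⟨N + i.1, by omega⟩ : Fin (2*N)).1 < N := by simp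
    show x _ * blk23 A B C D E F _ _ = auxRvec x i * D i j
    rw [blk23, Matrix.of_apply, dif_neg hi, dif_pos j.isLt]
    simp [auxRvec]

lemma auxBlkSnd (A B C D E F : Matrix (Fin N) (Fin N) ℂ) (x : Fin (2*N) → ℂ) (j : Fin N) :
    (x ᵥ* blk23 A B C D E F) ⟨N + j.1, by omega⟩ = (auxLvec x ᵥ* B) j + (auxRvec x ᵥ* E) j := by
  have hj1 : ¬ ((⟨N + j.1, by omega⟩ : Fin (3*N)).1 < N) := by simp
  have hj2 : (⟨N + j.1, by omega⟩ : Fin (3*N)).1 < 2*N := by have := j.isLt; simp; omega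
  show ∑ i, x i * blk23 A B C D E F i ⟨N + j.1, by omega⟩ = _
  rw [auxSumSplit]
  congr 1
  · apply Finset.sum_congr rfl; intro i _
    have hi : (⟨i.1, by omega⟩ : Fin (2*N)).1 < N := i.isLt
    show x _ * blk23 A B C D E F _ _ = auxLvec x i * B i j
    rw [blk23, Matrix.of_apply, dif_pos hi, dif_neg hj1, dif_pos hj2]
    simp [auxLvec]
  · apply Finset.sum_congr rfl; intro i _
    have hi : ¬ (⟨N + i.1, by omega⟩ : Fin (2*N)).1 < N := by simp
    show x _ * blk23 A B C D E F _ _ = auxRvec x i * E i j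
    rw [blk23, Matrix.of_apply, dif_neg hi, dif_neg hj1, dif_pos hj2]
    simp [auxRvec]

lemma auxBlkTrd (A B C D E F : Matrix (Fin N) (Fin N) ℂ) (x : Fin (2*N) → ℂ) (j : Fin N) :
    (x ᵥ* blk23 A B C D E F) ⟨2*N + j.1, by omega⟩ = (auxLvec x ᵥ* C) j + (auxRvec x ᵥ* F) j := by
  have hj1 : ¬ ((⟨2*N + j.1, by omega⟩ : Fin (3*N)).1 < N) := by simp; omega
  have hj2 : ¬ ((⟨2*N + j.1, by omega⟩ : Fin (3*N)).1 < 2*N) := by simp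
  show ∑ i, x i * blk23 A B C D E F i ⟨2*N + j.1, by omega⟩ = _
  rw [auxSumSplit]
  congr 1
  · apply Finset.sum_congr rfl; intro i _
    have hi : (⟨i.1, by omega⟩ : Fin (2*N)).1 < N := i.isLt
    show x _ * blk23 A B C D E F _ _ = auxLvec x i * C i j
    rw [blk23, Matrix.of_apply, dif_pos hi, dif_neg hj1, dif_neg hj2]
    simp [auxLvec]
  · apply Finset.sum_congr rfl; intro i _
    have hi : ¬ (⟨N + i.1, by omega⟩ : Fin (2*N)).1 < N := by simp
    show x _ * blk23 A B C D E F _ _ = auxRvec x i * F i j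
    rw [blk23, Matrix.of_apply, dif_neg hi, dif_neg hj1, dif_neg hj2]
    simp [auxRvec]

lemma auxVecMulSmulM (b : ℂ) (M : Matrix (Fin 4) (Fin 4) ℂ) (v : Fin 4 → ℂ) :
    v ᵥ* (b • M) = b • (v ᵥ* M) := by
  funext j
  show ∑ i, v i * (b • M) i j = b * ∑ i, v i * M i j
  rw [Finset.mul_sum]
  apply Finset.sum_congr rfl
  intro i _
  simp [Matrix.smul_apply]
  ring

lemma auxVecMulSubM (M1 M2 : Matrix (Fin 4) (Fin 4) ℂ) (v : Fin 4 → ℂ) :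
    v ᵥ* (M1 - M2) = v ᵥ* M1 - v ᵥ* M2 := by
  funext j
  show ∑ i, v i * (M1 - M2) i j = (∑ i, v i * M1 i j) - ∑ i, v i * M2 i j
  rw [← Finset.sum_sub_distrib]
  apply Finset.sum_congr rfl
  intro i _
  simp [Matrix.sub_apply]
  ring

lemma auxQmatTranspose (p : Fin 4 → ℂ) :
    (Qmat p)ᵀ = !![p 0, p 1, p 2, p 3;
                  -p 1, p 0, -p 3, p 2;
                  -p 2, p 3, p 0, -p 1;
                  -p 3, -p 2, p 1, p 0] := by
  ext i j
  fin_cases i <;> fin_cases j <;> simp [Qmat]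

lemma auxQmatTransposeMul (p : Fin 4 → ℂ) :
    (Qmat p)ᵀ * Qmat p = (∑ i, p i ^ 2) • 1 := by
  rw [auxQmatTranspose]
  ext i j
  fin_cases i <;> fin_cases j <;>
    simp [Qmat, Matrix.mul_apply, Fin.sum_univ_four, Matrix.one_apply] <;> ring

lemma auxQmatMulTranspose (p : Fin 4 → ℂ) :
    Qmat p * (Qmat p)ᵀ = (∑ i, p i ^ 2) • 1 := by
  rw [auxQmatTranspose]
  ext i j
  fin_cases i <;> fin_cases j <;>
    simp [Qmat, Matrix.mul_apply, Fin.sum_univ_four, Matrix.one_apply] <;> ring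

lemma auxQmatSub (p q : Fin 4 → ℂ) : Qmat p - Qmat q = Qmat (p - q) := by
  ext i j
  fin_cases i <;> fin_cases j <;> simp [Qmat] <;> ring

lemma auxQmatSmul (c : ℂ) (p : Fin 4 → ℂ) : Qmat (fun i => c * p i) = c • Qmat p := by
  ext i j
  fin_cases i <;> fin_cases j <;> simp [Qmat]

def QmatQ (p : Fin 4 → ℚ) : Matrix (Fin 4) (Fin 4) ℚ :=
  !![p 0, -p 1, -p 2, -p 3;
     p 1,  p 0,  p 3, -p 2;
     p 2, -p 3,  p 0,  p 1;
     p 3,  p 2, -p 1,  p 0]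

lemma auxQmatQMap (p : Fin 4 → ℚ) :
    (QmatQ p).map (fun q : ℚ => (q : ℂ)) = Qmat (fun i => ((p i : ℚ) : ℂ)) := by
  ext i j
  fin_cases i <;> fin_cases j <;> simp [QmatQ, Qmat]

lemma auxMapMul (M1 M2 : Matrix (Fin 4) (Fin 4) ℚ) :
    (M1 * M2).map (fun q : ℚ => (q : ℂ)) =
      M1.map (fun q : ℚ => (q : ℂ)) * M2.map (fun q : ℚ => (q : ℂ)) := by
  ext i j
  simp [Matrix.map_apply, Matrix.mul_apply]

lemma auxMapSub (M1 M2 : Matrix (Fin 4) (Fin 4) ℚ) :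
    (M1 - M2).map (fun q : ℚ => (q : ℂ)) =
      M1.map (fun q : ℚ => (q : ℂ)) - M2.map (fun q : ℚ => (q : ℂ)) := by
  ext i j
  simp [Matrix.map_apply]

lemma auxMapTranspose (M1 : Matrix (Fin 4) (Fin 4) ℚ) :
    (M1ᵀ).map (fun q : ℚ => (q : ℂ)) = (M1.map (fun q : ℚ => (q : ℂ)))ᵀ := by
  ext i j
  simp [Matrix.map_apply]

lemma auxOnesVecMulMap (Mq : Matrix (Fin 4) (Fin 4) ℚ) (j : Fin 4) :
    ((fun _ : Fin 4 => (1:ℂ)) ᵥ* (Mq.map (fun q : ℚ => (q : ℂ)))) j = ((∑ i, Mq i j : ℚ) : ℂ) := by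
  show ∑ i, (1:ℂ) * (Mq.map _) i j = _
  push_cast
  apply Finset.sum_congr rfl
  intro i _
  simp [Matrix.map_apply]

end AuxStmt13

set_option maxHeartbeats 1000000

theorem stmt13 (P1 P2 P3 P4 : Matrix (Fin 4) (Fin 4) ℂ)
    (h1 : P1 ∈ Sbpsk4) (h2 : P2 ∈ Sbpsk4) (h3 : P3 ∈ Sbpsk4) (h4 : P4 ∈ Sbpsk4)
    (hne : (P1, P2) ≠ (P3, P4)) :
    (Gmat P1 P2 P3 P4).rank = 8 := by
  classical
  obtain ⟨p1, hp1, rfl⟩ := h1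
  obtain ⟨p2, hp2, rfl⟩ := h2
  obtain ⟨p3, hp3, rfl⟩ := h3
  obtain ⟨p4, hp4, rfl⟩ := h4
  set a : ℂ := Complex.exp (Real.pi / 4 * Complex.I) / 2 with ha_def
  -- basic facts about a
  have haeq : a = ((Real.sqrt 2 / 4 : ℝ) : ℂ) * (1 + Complex.I) := by
    have h4' : (Real.pi : ℂ) / 4 * Complex.I = ((Real.pi / 4 : ℝ) : ℂ) * Complex.I := by
      push_cast; ring
    rw [ha_def, h4', Complex.exp_mul_I, ← Complex.ofReal_cos, ← Complex.ofReal_sin,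
      Real.cos_pi_div_four, Real.sin_pi_div_four]
    push_cast
    ring
  have ha0 : a ≠ 0 := div_ne_zero (Complex.exp_ne_zero _) two_ne_zero
  have hare : a.re = Real.sqrt 2 / 4 := by rw [haeq]; simp
  have haim : a.im = Real.sqrt 2 / 4 := by rw [haeq]; simp
  have hs2 : ((Real.sqrt 2 : ℝ) : ℂ) ^ 2 = 2 := by
    rw [← Complex.ofReal_pow, Real.sq_sqrt (by norm_num : (0:ℝ) ≤ 2)]
    norm_num
  have hI4 : a * a = Complex.I / 4 := by
    rw [haeq]; push_cast; linear_combination ((1 + Complex.I)^2 / 16) * hs2 + (1/8 : ℂ) * Complex.I_sq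
  have hs2pos : (0:ℝ) < Real.sqrt 2 := Real.sqrt_pos.mpr (by norm_num)
  -- sign extraction
  have hsign : ∀ p : Fin 4 → ℂ, (∀ i, p i ∈ Cbpsk4) →
      ∃ ε : Fin 4 → ℚ, (∀ i, ε i = 1 ∨ ε i = -1) ∧
        Qmat p = a • Qmat (fun i => ((ε i : ℚ) : ℂ)) := by
    intro p hp
    refine ⟨fun i => if p i = a then 1 else -1,
      fun i => by by_cases h : p i = a <;> simp [h], ?_⟩
    have hpe : p = fun i => a * (((if p i = a then (1:ℚ) else -1) : ℚ) : ℂ) := by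
      funext i
      by_cases h : p i = a
      · simp [h]
      · rcases hp i with h' | h'
        · exact absurd (by rw [h', ha_def]) h
        · rw [if_neg h]
          push_cast
          rw [h', ha_def]
          ring
    nth_rewrite 1 [hpe]
    exact auxQmatSmul a _
  obtain ⟨ε1, hε1, hP1⟩ := hsign p1 hp1
  obtain ⟨ε2, hε2, hP2⟩ := hsign p2 hp2
  obtain ⟨ε3, hε3, hP3⟩ := hsign p3 hp3
  obtain ⟨ε4, hε4, hP4⟩ := hsign p4 hp4
  set R1 := Qmat (fun i => ((ε1 i : ℚ) : ℂ)) with hR1_def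
  set R2 := Qmat (fun i => ((ε2 i : ℚ) : ℂ)) with hR2_def
  set R3 := Qmat (fun i => ((ε3 i : ℚ) : ℂ)) with hR3_def
  set R4 := Qmat (fun i => ((ε4 i : ℚ) : ℂ)) with hR4_def
  -- the kernel property
  have key : ∀ x : Fin (2*4) → ℂ,
      x ᵥ* Gmat (Qmat p1) (Qmat p2) (Qmat p3) (Qmat p4) = 0 → x = 0 := by
    intro x hx
    have hx' : (x ᵥ* blk23 1 (Qmat p1) (Qmat p1 * Qmat p2) 1 (Qmat p3) (Qmat p3 * Qmat p4))
        ᵥ* Abar 4 = 0 := by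
      rw [Matrix.vecMul_vecMul]; exact hx
    set w := x ᵥ* blk23 1 (Qmat p1) (Qmat p1 * Qmat p2) 1 (Qmat p3) (Qmat p3 * Qmat p4)
      with hw_def
    have hstep : ∀ k, k < 3*4 - 1 → ∀ (h1 : k+1 < 3*4) (h2 : k < 3*4),
        w ⟨k+1, h1⟩ = w ⟨k, h2⟩ := by
      intro k hk h1' h2'
      have h := congrFun hx' ⟨k, hk⟩
      rw [auxVecMulAbar] at h
      have h0 : (0 : Fin (3*4-1) → ℂ) ⟨k, hk⟩ = 0 := rfl
      rw [h0] at h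
      exact sub_eq_zero.mp h
    have hconst : ∀ k (hk : k < 3*4), w ⟨k, hk⟩ = w ⟨0, by norm_num⟩ := by
      intro k
      induction k with
      | zero => intro hk; rfl
      | succ n ih =>
        intro hk
        rw [hstep n (by omega) hk (by omega)]
        exact ih (by omega)
    set c := w ⟨0, by norm_num⟩ with hc_def
    set u := auxLvec x with hu_def
    set v := auxRvec x with hv_def
    set ONE : Fin 4 → ℂ := fun _ => 1 with hONE_def
    -- the three block equations
    have E1 : u + v = c • ONE := by
      funext j
      have h := auxBlkFst 1 (Qmat p1) (Qmat p1 * Qmat p2) 1 (Qmat p3) (Qmat p3 * Qmat p4) x j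
      rw [Matrix.vecMul_one, Matrix.vecMul_one] at h
      calc (u + v) j = w ⟨j.1, by omega⟩ := h.symm
        _ = c := hconst j.1 (by omega)
        _ = (c • ONE) j := by simp [hONE_def]
    have E2 : u ᵥ* Qmat p1 + v ᵥ* Qmat p3 = c • ONE := by
      funext j
      have h := auxBlkSnd 1 (Qmat p1) (Qmat p1 * Qmat p2) 1 (Qmat p3) (Qmat p3 * Qmat p4) x j
      calc (u ᵥ* Qmat p1 + v ᵥ* Qmat p3) j = w ⟨4 + j.1, by omega⟩ := h.symm
        _ = c := hconst (4 + j.1) (by omega)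
        _ = (c • ONE) j := by simp [hONE_def]
    have E3 : u ᵥ* (Qmat p1 * Qmat p2) + v ᵥ* (Qmat p3 * Qmat p4) = c • ONE := by
      funext j
      have h := auxBlkTrd 1 (Qmat p1) (Qmat p1 * Qmat p2) 1 (Qmat p3) (Qmat p3 * Qmat p4) x j
      calc (u ᵥ* (Qmat p1 * Qmat p2) + v ᵥ* (Qmat p3 * Qmat p4)) j
            = w ⟨2*4 + j.1, by omega⟩ := h.symm
        _ = c := hconst (2*4 + j.1) (by omega)
        _ = (c • ONE) j := by simp [hONE_def]
    -- rewrite E2, E3 in terms of the R-matrices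
    rw [hP1, hP3, auxVecMulSmulM, auxVecMulSmulM] at E2
    have hsm : ∀ (M N : Matrix (Fin 4) (Fin 4) ℂ), (a • M) * (a • N) = (a*a) • (M*N) := by
      intro M N; rw [Matrix.smul_mul, Matrix.mul_smul, smul_smul]
    rw [hP1, hP2, hP3, hP4, hsm, hsm, auxVecMulSmulM, auxVecMulSmulM,
      ← Matrix.vecMul_vecMul, ← Matrix.vecMul_vecMul] at E3
    -- quadratic identities
    have hsq : ∀ (ε : Fin 4 → ℚ), (∀ i, ε i = 1 ∨ ε i = -1) →
        (∑ i, ((ε i : ℚ):ℂ)^2) = (4:ℂ) := by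
      intro ε hε
      have h1 : ∀ i, ((ε i : ℚ):ℂ)^2 = 1 := fun i => by
        rcases hε i with h | h <;> rw [h] <;> norm_num
      simp [h1]
    have hR1R1 : R1 * R1ᵀ = (4:ℂ) • 1 := by
      rw [hR1_def, auxQmatMulTranspose, hsq ε1 hε1]
    have hR3R3 : R3 * R3ᵀ = (4:ℂ) • 1 := by
      rw [hR3_def, auxQmatMulTranspose, hsq ε3 hε3]
    -- cancellation lemma
    have cancel : ∀ (e e' : Fin 4 → ℚ), e ≠ e' → ∀ z : Fin 4 → ℂ,
        z ᵥ* (Qmat (fun i => ((e i : ℚ):ℂ)) - Qmat (fun i => ((e' i : ℚ):ℂ))) = 0 → z = 0 := by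
      intro e e' hee z hz
      have hQ : Qmat (fun i => ((e i : ℚ):ℂ)) - Qmat (fun i => ((e' i : ℚ):ℂ))
          = Qmat (fun i => ((e i - e' i : ℚ) : ℂ)) := by
        rw [auxQmatSub]
        apply congrArg
        funext i
        simp only [Pi.sub_apply]
        push_cast
        ring
      rw [hQ] at hz
      have hkc : (∑ i, ((e i - e' i : ℚ):ℂ)^2) = ((∑ i, (e i - e' i)^2 : ℚ) : ℂ) := by
        push_cast; rfl
      have hkpos : (0:ℚ) < ∑ i, (e i - e' i)^2 := by
        obtain ⟨i0, hi0⟩ := Function.ne_iff.mp hee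
        have hne0 : e i0 - e' i0 ≠ 0 := sub_ne_zero.mpr hi0
        exact Finset.sum_pos' (fun i _ => sq_nonneg _)
          ⟨i0, Finset.mem_univ _, by positivity⟩
      have h2 := congrArg (· ᵥ* (Qmat (fun i => ((e i - e' i : ℚ):ℂ)))ᵀ) hz
      simp only [Matrix.vecMul_vecMul, Matrix.zero_vecMul] at h2
      rw [auxQmatMulTranspose, hkc, auxVecMulSmulM, Matrix.vecMul_one] at h2
      rcases smul_eq_zero.mp h2 with h | h
      · exact absurd h (by exact_mod_cast hkpos.ne')
      · exact h
    -- assembling x = 0 from u = 0 and v = 0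
    have hxzero : u = 0 → v = 0 → x = 0 := by
      intro hu hv
      funext i
      rcases lt_or_ge i.1 4 with h | h
      · exact congrFun hu ⟨i.1, h⟩
      · have h' := congrFun hv ⟨i.1 - 4, by omega⟩
        have e : (⟨4 + (i.1 - 4), by omega⟩ : Fin (2*4)) = i := by
          apply Fin.ext; simp; omega
        rw [← e]
        exact h'
    by_cases hc0 : c = 0
    · -- c = 0 : show x = 0
      rw [hc0, zero_smul] at E1 E2 E3
      have huv : v = -u := eq_neg_of_add_eq_zero_right E1
      by_cases h13 : ε1 = ε3
      · -- R1 = R3, so must have ε2 ≠ ε4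
        have h24 : ε2 ≠ ε4 := by
          intro h24
          apply hne
          have ha' : Qmat p1 = Qmat p3 := by rw [hP1, hP3, hR1_def, hR3_def, h13]
          have hb' : Qmat p2 = Qmat p4 := by rw [hP2, hP4, hR2_def, hR4_def, h24]
          rw [ha', hb']
        have hR31 : R3 = R1 := by rw [hR1_def, hR3_def, h13]
        have hYX : v ᵥ* R3 = -(u ᵥ* R1) := by rw [huv, hR31, Matrix.neg_vecMul]
        rw [hYX, Matrix.neg_vecMul, smul_neg, ← sub_eq_add_neg, ← smul_sub] at E3
        have hXS : (u ᵥ* R1) ᵥ* (R2 - R4) = 0 := by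
          rw [auxVecMulSubM]
          rcases smul_eq_zero.mp E3 with h' | h'
          · exact absurd h' (mul_ne_zero ha0 ha0)
          · exact h'
        have hX0 : u ᵥ* R1 = 0 := by
          apply cancel ε2 ε4 h24
          rw [← hR2_def, ← hR4_def]
          exact hXS
        have hu0 : u = 0 := by
          have h := congrArg (· ᵥ* R1ᵀ) hX0
          simp only [Matrix.vecMul_vecMul, Matrix.zero_vecMul] at h
          rw [hR1R1, auxVecMulSmulM, Matrix.vecMul_one] at h
          rcases smul_eq_zero.mp h with h' | h'
          · norm_num at h'
          · exact h'
        exact hxzero hu0 (by rw [huv, hu0, neg_zero])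
      · -- ε1 ≠ ε3
        have hYX : v ᵥ* R3 = -(u ᵥ* R3) := by rw [huv, Matrix.neg_vecMul]
        rw [hYX, smul_neg, ← sub_eq_add_neg, ← smul_sub] at E2
        have hXdel : u ᵥ* (R1 - R3) = 0 := by
          rw [auxVecMulSubM]
          rcases smul_eq_zero.mp E2 with h' | h'
          · exact absurd h' ha0
          · exact h'
        have hu0 : u = 0 := by
          apply cancel ε1 ε3 h13
          rw [← hR1_def, ← hR3_def]
          exact hXdel
        exact hxzero hu0 (by rw [huv, hu0, neg_zero])
    · -- c ≠ 0 : contradiction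
      exfalso
      have hone0 : ONE 0 = 1 := rfl
      have E1' : (u ᵥ* R1) ᵥ* R1ᵀ + (v ᵥ* R3) ᵥ* R3ᵀ = (4*c) • ONE := by
        rw [Matrix.vecMul_vecMul, Matrix.vecMul_vecMul, hR1R1, hR3R3,
          auxVecMulSmulM, auxVecMulSmulM, Matrix.vecMul_one, Matrix.vecMul_one,
          ← smul_add, E1, smul_smul]
      by_cases h13 : ε1 = ε3
      · -- easy contradiction
        have hR31 : R3 = R1 := by rw [hR1_def, hR3_def, h13]
        rw [hR31, ← smul_add, ← Matrix.add_vecMul, E1, Matrix.smul_vecMul] at E2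
        have hmap1 : R1 = (QmatQ ε1).map (fun q : ℚ => (q:ℂ)) := by
          rw [hR1_def, auxQmatQMap]
        have hT : (ONE ᵥ* R1) 0 = ((∑ i, QmatQ ε1 i 0 : ℚ) : ℂ) := by
          rw [hmap1]; exact auxOnesVecMulMap _ 0
        have h0 := congrFun E2 0
        simp only [Pi.smul_apply, smul_eq_mul] at h0
        rw [hT, hone0] at h0
        have h0' : a * ((∑ i, QmatQ ε1 i 0 : ℚ) : ℂ) = 1 := by
          apply mul_left_cancel₀ hc0
          linear_combination h0
        have him := congrArg Complex.im h0'
        simp only [Complex.mul_im, hare, haim, Complex.ratCast_im, Complex.ratCast_re,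
          Complex.one_im, mul_zero, zero_add] at him
        have hTq0 : ((∑ i, QmatQ ε1 i 0 : ℚ) : ℝ) = 0 := by
          rcases mul_eq_zero.mp him with h' | h'
          · exact absurd h' (by positivity)
          · exact h'
        have hre := congrArg Complex.re h0'
        simp only [Complex.mul_re, hare, haim, Complex.ratCast_im, Complex.ratCast_re,
          Complex.one_re, mul_zero, sub_zero] at hre
        rw [hTq0] at hre
        norm_num at hre
      · -- hard case : ε1 ≠ ε3
        set Δ := R1 - R3 with hΔ_def
        set S := R2 - R4 with hS_def
        set X := u ᵥ* R1 with hX_def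
        set Y := v ᵥ* R3 with hY_def
        set k : ℚ := ∑ i, (ε1 i - ε3 i)^2 with hk_def
        have hkpos : (0:ℚ) < k := by
          obtain ⟨i0, hi0⟩ := Function.ne_iff.mp h13
          have hne0 : ε1 i0 - ε3 i0 ≠ 0 := sub_ne_zero.mpr hi0
          exact Finset.sum_pos' (fun i _ => sq_nonneg _)
            ⟨i0, Finset.mem_univ _, by positivity⟩
        have hΔQ : Δ = Qmat (fun i => ((ε1 i - ε3 i : ℚ) : ℂ)) := by
          rw [hΔ_def, hR1_def, hR3_def, auxQmatSub]
          apply congrArg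
          funext i
          simp only [Pi.sub_apply]
          push_cast
          ring
        have hΔtΔ : Δᵀ * Δ = ((k:ℚ):ℂ) • 1 := by
          rw [hΔQ, auxQmatTransposeMul]
          congr 1
          rw [hk_def]; push_cast; rfl
        -- derived vector equations
        have g1 := congrArg (· ᵥ* (Δ * S)) E1'
        simp only [Matrix.add_vecMul, Matrix.smul_vecMul, Matrix.vecMul_vecMul] at g1
        have g2 := congrArg (· ᵥ* (R3ᵀ * (Δ * S))) E2
        simp only [Matrix.add_vecMul, Matrix.smul_vecMul, Matrix.vecMul_vecMul] at g2
        have g6 := congrArg (· ᵥ* R4) E2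
        simp only [Matrix.add_vecMul, Matrix.smul_vecMul, Matrix.vecMul_vecMul] at g6
        have hmat : R1ᵀ * (Δ * S) - R3ᵀ * (Δ * S) = (((k:ℚ)):ℂ) • S := by
          rw [← Matrix.sub_mul, ← Matrix.transpose_sub, ← hΔ_def, ← Matrix.mul_assoc,
            hΔtΔ, Matrix.smul_mul, Matrix.one_mul]
        have g3 : X ᵥ* (R1ᵀ * (Δ * S)) - X ᵥ* (R3ᵀ * (Δ * S)) = ((k:ℚ):ℂ) • (X ᵥ* S) := by
          rw [← auxVecMulSubM, hmat, auxVecMulSmulM]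
        have g4 : X ᵥ* S = X ᵥ* R2 - X ᵥ* R4 := by
          rw [hS_def, auxVecMulSubM]
        -- scalar equations at index 0
        have t1 := congrFun g1 0
        have t2 := congrFun g2 0
        have t3 := congrFun g3 0
        have t4 := congrFun g4 0
        have t5 := congrFun E3 0
        have t6 := congrFun g6 0
        simp only [Pi.add_apply, Pi.sub_apply, Pi.smul_apply, smul_eq_mul, hone0] at t1 t2 t3 t4 t5 t6
        -- rational scalar identifications
        have hmapDS : Δ * S = (((QmatQ ε1 - QmatQ ε3) * (QmatQ ε2 - QmatQ ε4))).map
            (fun q : ℚ => (q:ℂ)) := by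
          rw [auxMapMul, auxMapSub, auxMapSub, auxQmatQMap, auxQmatQMap, auxQmatQMap,
            auxQmatQMap, hΔ_def, hS_def, hR1_def, hR2_def, hR3_def, hR4_def]
        have hmapB : R3ᵀ * (Δ * S) = ((QmatQ ε3)ᵀ *
            ((QmatQ ε1 - QmatQ ε3) * (QmatQ ε2 - QmatQ ε4))).map (fun q : ℚ => (q:ℂ)) := by
          rw [auxMapMul, auxMapTranspose, auxQmatQMap, ← hR3_def, ← hmapDS]
        have hmapC : R4 = (QmatQ ε4).map (fun q : ℚ => (q:ℂ)) := by
          rw [hR4_def, auxQmatQMap]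
        have hA : (ONE ᵥ* (Δ * S)) 0 =
            ((∑ i, ((QmatQ ε1 - QmatQ ε3) * (QmatQ ε2 - QmatQ ε4)) i 0 : ℚ) : ℂ) := by
          rw [hmapDS]; exact auxOnesVecMulMap _ 0
        have hB : (ONE ᵥ* (R3ᵀ * (Δ * S))) 0 =
            ((∑ i, ((QmatQ ε3)ᵀ * ((QmatQ ε1 - QmatQ ε3) * (QmatQ ε2 - QmatQ ε4))) i 0 : ℚ) : ℂ) := by
          rw [hmapB]; exact auxOnesVecMulMap _ 0
        have hC : (ONE ᵥ* R4) 0 = ((∑ i, QmatQ ε4 i 0 : ℚ) : ℂ) := by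
          rw [hmapC]; exact auxOnesVecMulMap _ 0
        set Aq : ℚ := ∑ i, ((QmatQ ε1 - QmatQ ε3) * (QmatQ ε2 - QmatQ ε4)) i 0 with hAq_def
        set Bq : ℚ := ∑ i, ((QmatQ ε3)ᵀ * ((QmatQ ε1 - QmatQ ε3) * (QmatQ ε2 - QmatQ ε4))) i 0
          with hBq_def
        set Cq : ℚ := ∑ i, QmatQ ε4 i 0 with hCq_def
        rw [hA] at t1
        rw [hB] at t2
        rw [hC] at t6
        -- the final scalar identity
        have hscal : 4*(a*a)*c*((Aq:ℚ):ℂ) - a*c*((Bq:ℚ):ℂ) - ((k:ℚ):ℂ)*c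
            + ((k:ℚ):ℂ)*a*c*((Cq:ℚ):ℂ) = 0 := by
          linear_combination -(a*a)*t1 + a*t2 + (a*a)*t3 + ((k:ℚ):ℂ)*t5 - ((k:ℚ):ℂ)*a*t6
            + ((k:ℚ):ℂ)*(a*a)*t4
        have hscal2 : Complex.I*((Aq:ℚ):ℂ) - a*((Bq:ℚ):ℂ) - ((k:ℚ):ℂ)
            + ((k:ℚ):ℂ)*a*((Cq:ℚ):ℂ) = 0 := by
          apply mul_left_cancel₀ hc0
          linear_combination hscal - 4*c*((Aq:ℚ):ℂ)*hI4
        have hre := congrArg Complex.re hscal2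
        simp only [Complex.add_re, Complex.sub_re, Complex.mul_re, Complex.mul_im,
          Complex.I_re, Complex.I_im, Complex.ratCast_re, Complex.ratCast_im, hare, haim,
          Complex.zero_re, mul_zero, zero_mul, sub_zero, zero_sub, zero_add, one_mul] at hre
        -- hre should now be a real equation; derive √2 * (k*Cq - Bq) = 4*k
        have hD : Real.sqrt 2 * ((k:ℝ)*(Cq:ℝ) - (Bq:ℝ)) = 4*(k:ℝ) := by
          linear_combination 4*hre
        rcases eq_or_ne ((k*Cq - Bq : ℚ)) 0 with hD0 | hD0
        · have : (k:ℝ)*(Cq:ℝ) - (Bq:ℝ) = 0 := by exact_mod_cast hD0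
          rw [this, mul_zero] at hD
          have : (k:ℝ) = 0 := by linarith
          have : k = 0 := by exact_mod_cast this
          exact absurd this hkpos.ne'
        · apply irrational_sqrt_two
          have hDr : ((k:ℝ)*(Cq:ℝ) - (Bq:ℝ)) ≠ 0 := by
            intro h
            apply hD0
            have h2 : ((k*Cq - Bq : ℚ):ℝ) = 0 := by push_cast; linear_combination h
            exact_mod_cast h2
          refine ⟨4*k/(k*Cq - Bq), ?_⟩
          have hcast : ((4*k/(k*Cq - Bq) : ℚ) : ℝ) = 4*(k:ℝ)/((k:ℝ)*(Cq:ℝ) - (Bq:ℝ)) := by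
            push_cast; ring
          rw [hcast, div_eq_iff hDr]
          linear_combination -hD
  have h8 := auxRankEq _ key
  simpa using h8
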